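/- For every real x, real λ > 0, and nonnegative integer n, one has λ^2 Σ_{k=0}^{n} C(n,k) 𝔅_{n-k}(x+1;λ) 𝔈_k(x+1;λ) − Σ_{k=0}^{n} C(n,k) 𝔅_{n-k}(x;λ) 𝔈_k(x;λ) = n · 2^n · x^{n-1} (with the convention that the right side is 0 when n = 0). -/

import Mathlib

open PowerSeries Finset

/-- `B n x` are the Apostol–Bernoulli polynomials `𝔅_n(x;ν)`:
`t e^{xt} = (ν e^t − 1) · Σ 𝔅_n(x;ν) t^n/n!` as formal power series over ℝ. -/
def IsApostolBernoulli (nu : ℝ) (B : ℕ → ℝ → ℝ) : Prop :=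
  ∀ x : ℝ,
    (PowerSeries.C nu * PowerSeries.exp ℝ - 1) *
        PowerSeries.mk (fun n => B n x / n.factorial) =
      PowerSeries.X * PowerSeries.rescale x (PowerSeries.exp ℝ)

/-- `E n x` are the Apostol–Euler polynomials `𝔈_n(x;ν)`:
`2 e^{xt} = (ν e^t + 1) · Σ 𝔈_n(x;ν) t^n/n!` as formal power series over ℝ. -/
def IsApostolEuler (nu : ℝ) (E : ℕ → ℝ → ℝ) : Prop :=
  ∀ x : ℝ,
    (PowerSeries.C nu * PowerSeries.exp ℝ + 1) *
        PowerSeries.mk (fun n => E n x / n.factorial) =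
      PowerSeries.C (2 : ℝ) * PowerSeries.rescale x (PowerSeries.exp ℝ)

theorem apostol_BE_convolution_diff (lam : ℝ) (hlam : 0 < lam)
    (B E : ℕ → ℝ → ℝ) (hB : IsApostolBernoulli lam B) (hE : IsApostolEuler lam E)
    (n : ℕ) (x : ℝ) :
    lam ^ 2 * ∑ k ∈ Finset.range (n + 1), (n.choose k : ℝ) * B (n - k) (x + 1) * E k (x + 1) -
        ∑ k ∈ Finset.range (n + 1), (n.choose k : ℝ) * B (n - k) x * E k x =
      (n : ℝ) * 2 ^ n * x ^ (n - 1) := by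
  classical
  set mkB : ℝ → PowerSeries ℝ := fun y => PowerSeries.mk (fun m => B m y / m.factorial) with hmkB
  set mkE : ℝ → PowerSeries ℝ := fun y => PowerSeries.mk (fun m => E m y / m.factorial) with hmkE
  set D : PowerSeries ℝ := (PowerSeries.C lam * PowerSeries.exp ℝ) ^ 2 - 1 with hDdef
  have hee : PowerSeries.exp ℝ * PowerSeries.exp ℝ = rescale (2 : ℝ) (PowerSeries.exp ℝ) := by
    have h := PowerSeries.exp_mul_exp_eq_exp_add (1 : ℝ) (1 : ℝ)
    rwa [rescale_one, RingHom.id_apply, show (1 : ℝ) + 1 = 2 by norm_num] at h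
  have hD1 : (PowerSeries.coeff 1) D = 2 * lam ^ 2 := by
    rw [hDdef, mul_pow, ← map_pow, sq (PowerSeries.exp ℝ), hee, map_sub, coeff_C_mul,
      coeff_rescale, coeff_exp, PowerSeries.coeff_one]
    norm_num
    ring
  have hD0 : D ≠ 0 := by
    intro h
    rw [h, map_zero] at hD1
    nlinarith
  have hP : ∀ y : ℝ, D * (mkB y * mkE y) =
      PowerSeries.C (2 : ℝ) * PowerSeries.X * rescale (2 * y) (PowerSeries.exp ℝ) := by
    intro y
    have h1 := hB y
    have h2 := hE y
    have e3 : rescale y (PowerSeries.exp ℝ) * rescale y (PowerSeries.exp ℝ)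
        = rescale (2 * y) (PowerSeries.exp ℝ) := by
      rw [PowerSeries.exp_mul_exp_eq_exp_add]; ring_nf
    rw [hmkB, hmkE, hDdef]
    calc ((PowerSeries.C lam * PowerSeries.exp ℝ) ^ 2 - 1) *
          (PowerSeries.mk (fun m => B m y / m.factorial) *
            PowerSeries.mk (fun m => E m y / m.factorial))
        = ((PowerSeries.C lam * PowerSeries.exp ℝ - 1) *
            PowerSeries.mk (fun m => B m y / m.factorial)) *
          ((PowerSeries.C lam * PowerSeries.exp ℝ + 1) *
            PowerSeries.mk (fun m => E m y / m.factorial)) := by ring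
      _ = (PowerSeries.X * rescale y (PowerSeries.exp ℝ)) *
          (PowerSeries.C (2 : ℝ) * rescale y (PowerSeries.exp ℝ)) := by rw [h1, h2]
      _ = PowerSeries.C (2 : ℝ) * PowerSeries.X *
          (rescale y (PowerSeries.exp ℝ) * rescale y (PowerSeries.exp ℝ)) := by ring
      _ = PowerSeries.C (2 : ℝ) * PowerSeries.X * rescale (2 * y) (PowerSeries.exp ℝ) := by rw [e3]
  have e2x : rescale (2 : ℝ) (PowerSeries.exp ℝ) * rescale (2 * x) (PowerSeries.exp ℝ)
      = rescale (2 * (x + 1)) (PowerSeries.exp ℝ) := by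
    rw [PowerSeries.exp_mul_exp_eq_exp_add]; ring_nf
  have hQ : D * (PowerSeries.C (lam ^ 2) * (mkB (x + 1) * mkE (x + 1)) - mkB x * mkE x)
      = D * (PowerSeries.C (2 : ℝ) * PowerSeries.X * rescale (2 * x) (PowerSeries.exp ℝ)) := by
    calc D * (PowerSeries.C (lam ^ 2) * (mkB (x + 1) * mkE (x + 1)) - mkB x * mkE x)
        = PowerSeries.C (lam ^ 2) * (D * (mkB (x + 1) * mkE (x + 1))) - D * (mkB x * mkE x) := by
          ring
      _ = PowerSeries.C (lam ^ 2) *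
            (PowerSeries.C (2 : ℝ) * PowerSeries.X * rescale (2 * (x + 1)) (PowerSeries.exp ℝ)) -
          PowerSeries.C (2 : ℝ) * PowerSeries.X * rescale (2 * x) (PowerSeries.exp ℝ) := by
          rw [hP (x + 1), hP x]
      _ = PowerSeries.C (lam ^ 2) *
            (PowerSeries.C (2 : ℝ) * PowerSeries.X *
              (rescale (2 : ℝ) (PowerSeries.exp ℝ) * rescale (2 * x) (PowerSeries.exp ℝ))) -
          PowerSeries.C (2 : ℝ) * PowerSeries.X * rescale (2 * x) (PowerSeries.exp ℝ) := by
          rw [e2x]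
      _ = (PowerSeries.C (lam ^ 2) * (PowerSeries.exp ℝ * PowerSeries.exp ℝ) - 1) *
          (PowerSeries.C (2 : ℝ) * PowerSeries.X * rescale (2 * x) (PowerSeries.exp ℝ)) := by
          rw [hee]; ring
      _ = D * (PowerSeries.C (2 : ℝ) * PowerSeries.X * rescale (2 * x) (PowerSeries.exp ℝ)) := by
          rw [hDdef, mul_pow, ← map_pow]; ring
  have hQ2 := mul_left_cancel₀ hD0 hQ
  have key : ∀ y : ℝ, ∑ k ∈ Finset.range (n + 1), (n.choose k : ℝ) * B (n - k) y * E k y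
      = (n.factorial : ℝ) * (PowerSeries.coeff n) (mkB y * mkE y) := by
    intro y
    rw [coeff_mul, Finset.Nat.sum_antidiagonal_eq_sum_range_succ_mk, Finset.mul_sum,
      ← Finset.sum_range_reflect]
    refine Finset.sum_congr rfl fun k hk => ?_
    have hk' : k ≤ n := Nat.lt_succ_iff.mp (Finset.mem_range.mp hk)
    have h1 : n + 1 - 1 - k = n - k := by omega
    have h2 : n - (n - k) = k := by omega
    rw [h1, h2, Nat.choose_symm hk', hmkB, hmkE]
    simp only [coeff_mk]
    rw [Nat.cast_choose ℝ hk']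
    have f1 : (k.factorial : ℝ) ≠ 0 := Nat.cast_ne_zero.mpr k.factorial_ne_zero
    have f2 : ((n - k).factorial : ℝ) ≠ 0 := Nat.cast_ne_zero.mpr (n - k).factorial_ne_zero
    field_simp
  have hc := congrArg (fun f => (n.factorial : ℝ) * (PowerSeries.coeff n) f) hQ2
  simp only [map_sub, coeff_C_mul] at hc
  have lhs_eq : lam ^ 2 * ∑ k ∈ Finset.range (n + 1),
        (n.choose k : ℝ) * B (n - k) (x + 1) * E k (x + 1) -
      ∑ k ∈ Finset.range (n + 1), (n.choose k : ℝ) * B (n - k) x * E k x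
      = (n.factorial : ℝ) * (PowerSeries.coeff n)
          (PowerSeries.C (2 : ℝ) * PowerSeries.X * rescale (2 * x) (PowerSeries.exp ℝ)) := by
    rw [key (x + 1), key x, ← hc]
    ring
  rw [lhs_eq]
  cases n with
  | zero =>
    simp [mul_assoc, coeff_zero_X_mul]
  | succ m =>
    rw [mul_assoc, coeff_C_mul, coeff_succ_X_mul, coeff_rescale, coeff_exp]
    push_cast [Nat.factorial_succ, mul_pow]
    have f1 : (m.factorial : ℝ) ≠ 0 := Nat.cast_ne_zero.mpr m.factorial_ne_zero
    field_simp
    ring
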